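/- arXiv:2009.13168 — 2 statements merged into one kernel-verified Lean document; each statement's English description precedes it below -/
import Mathlib

section
/- (Bottom shift S₊) Let ψ = d+e-a-b-c-1 and η = (abc + ψdf)/(d(d-a-b-c) + ab+ac+bc + ψf). For parameters ensuring convergence and f,d,ψ,η ≠ 0, one has ₄F₃(a,b,c,f+1; d,e,f; 1) = [(abc + ψdf)/(ψdf)] · ₄F₃(a,b,c,η+1; d+1,e,η; 1). -/
open Complex

/-- Pochhammer (rising factorial) symbol. -/
noncomputable def poch (a : ℂ) (n : ℕ) : ℂ := ∏ i ∈ Finset.range n, (a + i)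

/-- General term of the ₃F₂ series at unit argument. -/
noncomputable def term32 (a b c d e : ℂ) (n : ℕ) : ℂ :=
  (poch a n * poch b n * poch c n) / ((n.factorial : ℂ) * poch d n * poch e n)

/-- ₃F₂ at unit argument. -/
noncomputable def hyp32 (a b c d e : ℂ) : ℂ := ∑' n : ℕ, term32 a b c d e n

/-- General term of the ₄F₃ series at unit argument. -/
noncomputable def term43 (a₁ a₂ a₃ a₄ b₁ b₂ b₃ : ℂ) (n : ℕ) : ℂ :=
  (poch a₁ n * poch a₂ n * poch a₃ n * poch a₄ n) /
    ((n.factorial : ℂ) * poch b₁ n * poch b₂ n * poch b₃ n)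

/-- ₄F₃ at unit argument. -/
noncomputable def hyp43 (a₁ a₂ a₃ a₄ b₁ b₂ b₃ : ℂ) : ℂ := ∑' n : ℕ, term43 a₁ a₂ a₃ a₄ b₁ b₂ b₃ n

/-- `x` is not a nonpositive integer (equivalently, not a pole of `Γ`). -/
def notNonposInt (x : ℂ) : Prop := ∀ n : ℕ, x ≠ -(n : ℂ)

/-!
Both ₄F₃ series have terms of the form `t n * r n`, where `t n` is the term of
₃F₂(a, b, c; d, e; 1) and `r n` is rational in `n`. With the prescribed `η`, the difference of
the left-hand term and `(abc + ψdf)/(ψdf)` times the right-hand term telescopes as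
`R n - R (n + 1)`, where `R n = t n · n (n + e - 1) / (fψ)` and `R 0 = 0`. Hence the difference
of the two sums is `-lim R n`. That limit is `0`: `R n = O(n · (n-th term of the left series))`,
so a nonzero limit would bound the summable left-hand terms below by a multiple of `1/n`.
-/

open Filter Topology Asymptotics

namespace notNonposInt

variable {x : ℂ}

lemma add_natCast_ne_zero (h : notNonposInt x) (n : ℕ) : x + n ≠ 0 :=
  fun hx => h n (eq_neg_of_add_eq_zero_left hx)

lemma ne_zero (h : notNonposInt x) : x ≠ 0 := by
  simpa using h.add_natCast_ne_zero 0

lemma add_one (h : notNonposInt x) : notNonposInt (x + 1) := fun n hx =>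
  h (n + 1) (by push_cast; linear_combination hx)

end notNonposInt

lemma poch_succ (x : ℂ) (n : ℕ) : poch x (n + 1) = poch x n * (x + n) :=
  Finset.prod_range_succ _ _

lemma poch_ne_zero {x : ℂ} (h : notNonposInt x) (n : ℕ) : poch x n ≠ 0 :=
  Finset.prod_ne_zero_iff.2 fun i _ => h.add_natCast_ne_zero i

lemma mul_poch_add_one (x : ℂ) (n : ℕ) : x * poch (x + 1) n = poch x n * (x + n) := by
  induction n with
  | zero => simp [poch]
  | succ n ih =>
    rw [poch_succ, poch_succ, ← mul_assoc, ih]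
    push_cast
    ring

lemma term43_add_one_self (a b c d e f : ℂ) (hd : notNonposInt d) (he : notNonposInt e)
    (hf : notNonposInt f) (n : ℕ) :
    term43 a b c (f + 1) d e f n = term32 a b c d e n * ((f + n) / f) := by
  have := poch_ne_zero hd n
  have := poch_ne_zero he n
  have := poch_ne_zero hf n
  have := hf.ne_zero
  have : (n.factorial : ℂ) ≠ 0 := Nat.cast_ne_zero.2 n.factorial_ne_zero
  simp only [term43, term32]
  field_simp
  linear_combination (poch a n * poch b n * poch c n) * mul_poch_add_one f n

lemma term43_add_one_self_add_one (a b c d e g : ℂ) (hd : notNonposInt d) (he : notNonposInt e)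
    (hg : notNonposInt g) (n : ℕ) :
    term43 a b c (g + 1) (d + 1) e g n = term32 a b c d e n * (d * (g + n) / ((d + n) * g)) := by
  have := poch_ne_zero hd n
  have := poch_ne_zero hd.add_one n
  have := poch_ne_zero he n
  have := poch_ne_zero hg n
  have := hg.ne_zero
  have := hd.add_natCast_ne_zero n
  have hg' := mul_poch_add_one g n
  have hd' := mul_poch_add_one d n
  have : (n.factorial : ℂ) ≠ 0 := Nat.cast_ne_zero.2 n.factorial_ne_zero
  simp only [term43, term32]
  field_simp
  linear_combination
    (poch a n * poch b n * poch c n) * (poch d n * (d + n) * hg' - poch g n * (g + n) * hd')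

lemma term32_succ (a b c d e : ℂ) (hd : notNonposInt d) (he : notNonposInt e) (n : ℕ) :
    term32 a b c d e (n + 1) =
      term32 a b c d e n * ((a + n) * (b + n) * (c + n) / ((n + 1) * (d + n) * (e + n))) := by
  have := poch_ne_zero hd n
  have := poch_ne_zero he n
  have := hd.add_natCast_ne_zero n
  have := he.add_natCast_ne_zero n
  simp only [term32, poch_succ, Nat.factorial_succ]
  push_cast
  field_simp

noncomputable def bottomShiftRemainder (a b c d e f ψ : ℂ) (n : ℕ) : ℂ :=
  term32 a b c d e n * n * (n + e - 1) / (f * ψ)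

lemma bottomShiftRemainder_zero (a b c d e f ψ : ℂ) :
    bottomShiftRemainder a b c d e f ψ 0 = 0 := by
  simp [bottomShiftRemainder]

lemma term43_sub_mul_term43_eq_bottomShiftRemainder_sub (a b c d e f ψ η : ℂ)
    (hψ : ψ = d + e - a - b - c - 1) (hψ0 : ψ ≠ 0)
    (hη : η * (d * (d - a - b - c) + a * b + a * c + b * c + ψ * f) = a * b * c + ψ * d * f)
    (hd : notNonposInt d) (he : notNonposInt e) (hf : notNonposInt f) (hηp : notNonposInt η)
    (n : ℕ) :
    term43 a b c (f + 1) d e f n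
        - (a * b * c + ψ * d * f) / (ψ * d * f) * term43 a b c (η + 1) (d + 1) e η n =
      bottomShiftRemainder a b c d e f ψ n - bottomShiftRemainder a b c d e f ψ (n + 1) := by
  subst hψ
  have := hd.ne_zero
  have := hf.ne_zero
  have := hηp.ne_zero
  have := hd.add_natCast_ne_zero n
  have := he.add_natCast_ne_zero n
  have : (n : ℂ) + 1 ≠ 0 := Nat.cast_add_one_ne_zero n
  rw [bottomShiftRemainder, bottomShiftRemainder, term43_add_one_self a b c d e f hd he hf,
    term43_add_one_self_add_one a b c d e η hd he hηp, term32_succ a b c d e hd he]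
  push_cast
  field_simp
  linear_combination (term32 a b c d e n * (e + n) * n) * hη

lemma HasSum.tendsto_of_eq_sub_succ {G : Type*} [AddCommGroup G] [TopologicalSpace G]
    [IsTopologicalAddGroup G] {u R : ℕ → G} {S : G} (hu : HasSum u S)
    (h : ∀ n, u n = R n - R (n + 1)) : Tendsto R atTop (𝓝 (R 0 - S)) := by
  have hpartial : ∀ N, R N = R 0 - ∑ i ∈ Finset.range N, u i := fun N => by
    rw [Finset.sum_congr rfl fun i _ => h i, Finset.sum_range_sub', sub_sub_cancel]
  simpa only [← hpartial] using hu.tendsto_sum_nat.const_sub (R 0)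

lemma eq_zero_of_tendsto_of_isBigO_natCast_smul {E F : Type*} [NormedAddCommGroup E]
    [NormedSpace ℝ E] [FiniteDimensional ℝ E] [NormedAddCommGroup F] {u : ℕ → E} {R : ℕ → F}
    {L : F} (hu : Summable u) (hR : Tendsto R atTop (𝓝 L))
    (hRu : R =O[atTop] fun n => (n : ℝ) • u n) : L = 0 := by
  by_contra hL
  have hbelow : (fun _ => (1 : ℝ)) =O[atTop] R :=
    (isBigO_const_left_iff_pos_le_norm one_ne_zero).2 ⟨‖L‖ / 2, by positivity,
      hR.norm.eventually (eventually_ge_nhds (half_lt_self (norm_pos_iff.2 hL)))⟩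
  have hinv : (fun n : ℕ => 1 / (n : ℝ)) =O[atTop] u := by
    have hnorm := (isBigO_refl (fun n : ℕ => 1 / (n : ℝ)) atTop).mul (hbelow.trans hRu).norm_right
    refine (hnorm.congr' (by simp) ?_).trans (isBigO_refl _ _).norm_left
    filter_upwards [eventually_ne_atTop 0] with n hn
    simp [norm_smul, hn]
  exact Real.not_summable_one_div_natCast (summable_of_isBigO_nat' hu hinv)

lemma bottomShiftRemainder_isBigO (a b c d e f ψ : ℂ) (hd : notNonposInt d)
    (he : notNonposInt e) (hf : notNonposInt f) :
    bottomShiftRemainder a b c d e f ψ =O[atTop]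
      fun n => (n : ℝ) • term43 a b c (f + 1) d e f n := by
  have hratio : (fun n : ℕ => (n + e - 1) / ((f + n) * ψ)) =O[atTop] fun _ => (1 : ℂ) := by
    have := (tendsto_add_mul_div_add_mul_atTop_nhds (e - 1) f 1 one_ne_zero).div_const ψ
    refine (this.isBigO_one ℂ).congr_left fun n => ?_
    rw [div_div]
    ring
  refine ((isBigO_refl (fun n : ℕ => (n : ℂ) * term43 a b c (f + 1) d e f n) atTop).mul
    hratio).congr (fun n => ?_) fun n => ?_
  · have := hf.ne_zero
    have := hf.add_natCast_ne_zero n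
    rw [bottomShiftRemainder, term43_add_one_self a b c d e f hd he hf]
    field_simp
  · simp [Complex.real_smul]

theorem stmt13_general (a b c d e f : ℂ) (ψ η : ℂ)
    (hψ : ψ = d + e - a - b - c - 1)
    (hden : d * (d - a - b - c) + a * b + a * c + b * c + ψ * f ≠ 0)
    (hη : η = (a * b * c + ψ * d * f) / (d * (d - a - b - c) + a * b + a * c + b * c + ψ * f))
    (hψ0 : ψ ≠ 0)
    (hd : notNonposInt d) (he : notNonposInt e) (hfp : notNonposInt f)
    (hηp : notNonposInt η)
    (h1 : Summable (term43 a b c (f + 1) d e f))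
    (h2 : Summable (term43 a b c (η + 1) (d + 1) e η)) :
    hyp43 a b c (f + 1) d e f =
      ((a * b * c + ψ * d * f) / (ψ * d * f)) * hyp43 a b c (η + 1) (d + 1) e η := by
  have hηrel :
      η * (d * (d - a - b - c) + a * b + a * c + b * c + ψ * f) = a * b * c + ψ * d * f := by
    rw [hη, div_mul_cancel₀ _ hden]
  have hlim := (h1.hasSum.sub (h2.hasSum.mul_left _)).tendsto_of_eq_sub_succ fun n =>
    term43_sub_mul_term43_eq_bottomShiftRemainder_sub a b c d e f ψ η hψ hψ0 hηrel hd he hfp hηp n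
  have hzero := eq_zero_of_tendsto_of_isBigO_natCast_smul h1 hlim
    (bottomShiftRemainder_isBigO a b c d e f ψ hd he hfp)
  rwa [bottomShiftRemainder_zero, zero_sub, neg_eq_zero, sub_eq_zero] at hzero

theorem stmt13 (a b c d e f : ℂ) (ψ η : ℂ)
    (hψ : ψ = d + e - a - b - c - 1)
    (hden : d * (d - a - b - c) + a * b + a * c + b * c + ψ * f ≠ 0)
    (hη : η = (a * b * c + ψ * d * f) / (d * (d - a - b - c) + a * b + a * c + b * c + ψ * f))
    (hf : f ≠ 0) (hd0 : d ≠ 0) (hψ0 : ψ ≠ 0) (hη0 : η ≠ 0)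
    (hconv : 0 < ψ.re)
    (hd : notNonposInt d) (he : notNonposInt e) (hfp : notNonposInt f)
    (hd1 : notNonposInt (d + 1)) (hηp : notNonposInt η)
    (h1 : Summable (term43 a b c (f + 1) d e f))
    (h2 : Summable (term43 a b c (η + 1) (d + 1) e η)) :
    hyp43 a b c (f + 1) d e f =
      ((a * b * c + ψ * d * f) / (ψ * d * f)) * hyp43 a b c (η + 1) (d + 1) e η :=
  stmt13_general a b c d e f ψ η hψ hden hη hψ0 hd he hfp hηp h1 h2
end

section
/- (Transformation of the log-derivative ratio) Suppose a transformation F(r,f) = M(r)·((εf+λ(r))/f)·F(Dr, η) with η = (εf+λ(r))/(α(r)f+β(r)) holds identically in f, where F(r,f) = ₄F₃(a,b,c,f+1; d,e,f; 1) for r = (a,b,c,d,e). Then the ratio Ψ(r) = F₂(r)/F₁(r), with F₁(r) = ₃F₂(a,b,c; d,e; 1) and F₂(r) = (abc/(de))·₃F₂(a+1,b+1,c+1; d+1,e+1; 1), satisfies Ψ(r) = (β(r)Ψ(Dr) + λ(r))/(α(r)Ψ(Dr) + ε). -/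
open Complex

/-!
Substituting the decomposition `F(r, f) = F₁(r) + F₂(r)/f` on both sides of the transformation
and clearing denominators turns it into an identity between two affine functions of `f`,
`F₁ f + F₂ = M (ε F₁' + α F₂') f + M (λ F₁' + β F₂')`. Holding on a nonempty open set, it holds at
two distinct points, so the coefficients agree; dividing the constant coefficient by the linear
one cancels `M` and gives the Möbius relation between `Ψ(r)` and `Ψ(Dr)`.
-/

theorem eq_and_eq_of_affine_eqOn {K : Type*} [Field K] {s : Set K} (hs : s.Nontrivial)
    {p q p' q' : K} (h : ∀ x ∈ s, p * x + q = p' * x + q') : p = p' ∧ q = q' := by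
  obtain ⟨x, hx, y, hy, hxy⟩ := hs
  have hp : p = p' := by
    have hdiff : (p - p') * (x - y) = 0 := by linear_combination h x hx - h y hy
    exact sub_eq_zero.mp ((mul_eq_zero.mp hdiff).resolve_right (sub_ne_zero.mpr hxy))
  exact ⟨hp, by linear_combination h x hx - x * hp⟩

theorem mul_add_eq_affine_of_transform {K : Type*} [Field K] {G₁ G₂ G₁' G₂' M ε lam α β f : K}
    (hf : f ≠ 0) (hη : (ε * f + lam) / (α * f + β) ≠ 0)
    (h : G₁ + G₂ / f =
      M * ((ε * f + lam) / f) * (G₁' + G₂' / ((ε * f + lam) / (α * f + β)))) :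
    G₁ * f + G₂ = M * (ε * G₁' + α * G₂') * f + M * (lam * G₁' + β * G₂') := by
  obtain ⟨hnum, hden⟩ : ε * f + lam ≠ 0 ∧ α * f + β ≠ 0 := by
    simpa only [ne_eq, div_eq_zero_iff, not_or] using hη
  have hrhs : M * ((ε * f + lam) / f) * (G₁' + G₂' / ((ε * f + lam) / (α * f + β))) =
      (M * (ε * G₁' + α * G₂') * f + M * (lam * G₁' + β * G₂')) / f := by
    field_simp
    ring
  rwa [hrhs, add_div' _ _ _ hf, div_left_inj' hf] at h

theorem stmt17_general (a b c d e a' b' c' d' e' M lam α' β' ε : ℂ)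
    (F₁ F₂ F₁' F₂' : ℂ)
    -- the decomposition F(r,f) = F₁(r) + F₂(r)/f holds for all f ≠ 0
    (hdec : ∀ f : ℂ, f ≠ 0 → hyp43 a b c (f + 1) d e f = F₁ + F₂ / f)
    (hdec' : ∀ f : ℂ, f ≠ 0 → hyp43 a' b' c' (f + 1) d' e' f = F₁' + F₂' / f)
    (U : Set ℂ) (hUopen : IsOpen U) (hUne : U.Nonempty)
    (hU : ∀ f ∈ U, f ≠ 0 ∧ α' * f + β' ≠ 0 ∧ (ε * f + lam) / (α' * f + β') ≠ 0)
    -- the transformation F(r,f) = M·((εf+λ)/f)·F(Dr, η) holds on U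
    (htrans : ∀ f ∈ U,
      hyp43 a b c (f + 1) d e f =
        M * ((ε * f + lam) / f) *
          hyp43 a' b' c' ((ε * f + lam) / (α' * f + β') + 1) d' e'
            ((ε * f + lam) / (α' * f + β')))
    (hF₁0 : F₁ ≠ 0) (hF₁'0 : F₁' ≠ 0) :
    F₂ / F₁ = (β' * (F₂' / F₁') + lam) / (α' * (F₂' / F₁') + ε) := by
  have haffine : ∀ f ∈ U,
      F₁ * f + F₂ = M * (ε * F₁' + α' * F₂') * f + M * (lam * F₁' + β' * F₂') := by
    intro f hf
    obtain ⟨hf0, -, hη⟩ := hU f hf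
    refine mul_add_eq_affine_of_transform hf0 hη ?_
    rw [← hdec f hf0, ← hdec' _ hη]
    exact htrans f hf
  obtain ⟨f₀, hf₀⟩ := hUne
  have hUnontriv : U.Nontrivial := (infinite_of_mem_nhds f₀ (hUopen.mem_nhds hf₀)).nontrivial
  obtain ⟨hF₁, hF₂⟩ := eq_and_eq_of_affine_eqOn hUnontriv haffine
  have hM : M ≠ 0 := left_ne_zero_of_mul (hF₁ ▸ hF₁0)
  rw [hF₁, hF₂, mul_div_mul_left _ _ hM, ← div_div_div_cancel_right₀ hF₁'0]
  congr 1 <;> field_simp <;> ring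

theorem stmt17 (a b c d e a' b' c' d' e' M lam α' β' ε : ℂ)
    (hε : ε = 0 ∨ ε = 1)
    (F₁ F₂ F₁' F₂' : ℂ)
    (hF₁ : F₁ = hyp32 a b c d e)
    (hF₂ : F₂ = a * b * c / (d * e) * hyp32 (a + 1) (b + 1) (c + 1) (d + 1) (e + 1))
    (hF₁' : F₁' = hyp32 a' b' c' d' e')
    (hF₂' : F₂' = a' * b' * c' / (d' * e') *
      hyp32 (a' + 1) (b' + 1) (c' + 1) (d' + 1) (e' + 1))
    -- the decomposition F(r,f) = F₁(r) + F₂(r)/f holds for all f ≠ 0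
    (hdec : ∀ f : ℂ, f ≠ 0 → hyp43 a b c (f + 1) d e f = F₁ + F₂ / f)
    (hdec' : ∀ f : ℂ, f ≠ 0 → hyp43 a' b' c' (f + 1) d' e' f = F₁' + F₂' / f)
    (U : Set ℂ) (hUopen : IsOpen U) (hUne : U.Nonempty)
    (hU : ∀ f ∈ U, f ≠ 0 ∧ α' * f + β' ≠ 0 ∧ (ε * f + lam) / (α' * f + β') ≠ 0)
    -- the transformation F(r,f) = M·((εf+λ)/f)·F(Dr, η) holds on U
    (htrans : ∀ f ∈ U,
      hyp43 a b c (f + 1) d e f =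
        M * ((ε * f + lam) / f) *
          hyp43 a' b' c' ((ε * f + lam) / (α' * f + β') + 1) d' e'
            ((ε * f + lam) / (α' * f + β')))
    (hF₁0 : F₁ ≠ 0) (hF₁'0 : F₁' ≠ 0)
    (hden : α' * (F₂' / F₁') + ε ≠ 0) :
    F₂ / F₁ = (β' * (F₂' / F₁') + lam) / (α' * (F₂' / F₁') + ε) :=
  stmt17_general a b c d e a' b' c' d' e' M lam α' β' ε F₁ F₂ F₁' F₂' hdec hdec' U hUopen hUne hU
    htrans hF₁0 hF₁'0
end
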